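/- Let (g,[·,·],N) be a Nijenhuis Leibniz algebra over a field of characteristic 0, let ((μ_i),(N_i)) and ((μ'_i),(N'_i)) be two formal one-parameter deformations of it, and let (ψ_i)_{i≥0} be a formal isomorphism from ((μ_i),(N_i)) to ((μ'_i),(N'_i)). Then the two infinitesimals are cohomologous; explicitly, for all x,y ∈ g: μ'₁(x,y) − μ₁(x,y) = [x,ψ₁(y)] + [ψ₁(x),y] − ψ₁([x,y]) and N'₁(x) − N₁(x) = N(ψ₁(x)) − ψ₁(N(x)). -/

import Mathlib

section

variable {K : Type*} [Field K] {g : Type*} [AddCommGroup g] [Module K g]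

/-- A formal one-parameter deformation of a Nijenhuis Leibniz algebra
`(g, br, N)`, given by sequences of bilinear maps `μ` and linear maps `Nseq`. -/
def IsDeformation (br : g →ₗ[K] g →ₗ[K] g) (N : g →ₗ[K] g)
    (μ : ℕ → g →ₗ[K] g →ₗ[K] g) (Nseq : ℕ → g →ₗ[K] g) : Prop :=
  μ 0 = br ∧ Nseq 0 = N ∧
    (∀ (n : ℕ) (x y z : g),
      ∑ p ∈ Finset.HasAntidiagonal.antidiagonal n, μ p.1 x (μ p.2 y z) =
        (∑ p ∈ Finset.HasAntidiagonal.antidiagonal n, μ p.1 (μ p.2 x y) z) +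
          ∑ p ∈ Finset.HasAntidiagonal.antidiagonal n, μ p.1 y (μ p.2 x z)) ∧
    (∀ (n : ℕ) (x y : g),
      ∑ p ∈ Finset.HasAntidiagonal.antidiagonal n, ∑ q ∈ Finset.HasAntidiagonal.antidiagonal p.2,
          μ p.1 (Nseq q.1 x) (Nseq q.2 y) =
        (∑ p ∈ Finset.HasAntidiagonal.antidiagonal n, ∑ q ∈ Finset.HasAntidiagonal.antidiagonal p.2,
            Nseq p.1 (μ q.1 (Nseq q.2 x) y)) +
          (∑ p ∈ Finset.HasAntidiagonal.antidiagonal n, ∑ q ∈ Finset.HasAntidiagonal.antidiagonal p.2,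
              Nseq p.1 (μ q.1 x (Nseq q.2 y))) -
            ∑ p ∈ Finset.HasAntidiagonal.antidiagonal n, ∑ q ∈ Finset.HasAntidiagonal.antidiagonal p.2,
              Nseq p.1 (Nseq q.1 (μ q.2 x y)))

/-- A formal isomorphism from the deformation `(μ, Nseq)` to the deformation
`(μ', Nseq')`: a sequence `ψ` of linear maps with `ψ 0 = id` such that
`ψ_t ∘ μ'_t = μ_t ∘ (ψ_t × ψ_t)` and `ψ_t ∘ N'_t = N_t ∘ ψ_t`. -/
def IsFormalIso (μ : ℕ → g →ₗ[K] g →ₗ[K] g) (Nseq : ℕ → g →ₗ[K] g)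
    (μ' : ℕ → g →ₗ[K] g →ₗ[K] g) (Nseq' : ℕ → g →ₗ[K] g)
    (ψ : ℕ → g →ₗ[K] g) : Prop :=
  ψ 0 = LinearMap.id ∧
    (∀ (n : ℕ) (x y : g),
      ∑ p ∈ Finset.HasAntidiagonal.antidiagonal n, ψ p.1 (μ' p.2 x y) =
        ∑ p ∈ Finset.HasAntidiagonal.antidiagonal n, ∑ q ∈ Finset.HasAntidiagonal.antidiagonal p.2,
          μ p.1 (ψ q.1 x) (ψ q.2 y)) ∧
    (∀ (n : ℕ) (x : g),
      ∑ p ∈ Finset.HasAntidiagonal.antidiagonal n, ψ p.1 (Nseq' p.2 x) =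
        ∑ p ∈ Finset.HasAntidiagonal.antidiagonal n, Nseq p.1 (ψ p.2 x))

end

namespace IsFormalIso

variable {K : Type*} [Field K] {g : Type*} [AddCommGroup g] [Module K g]
  {μ μ' : ℕ → g →ₗ[K] g →ₗ[K] g} {Nseq Nseq' : ℕ → g →ₗ[K] g} {ψ : ℕ → g →ₗ[K] g}

theorem sub_first_bracket (h : IsFormalIso μ Nseq μ' Nseq' ψ) (x y : g) :
    μ' 1 x y - μ 1 x y = μ 0 x (ψ 1 y) + μ 0 (ψ 1 x) y - ψ 1 (μ' 0 x y) := by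
  obtain ⟨hψ0, hμ, -⟩ := h
  have first_order := hμ 1 x y
  simp only [Finset.Nat.sum_antidiagonal_succ, Finset.Nat.antidiagonal_zero,
    Finset.sum_singleton, zero_add, hψ0, LinearMap.id_apply] at first_order
  linear_combination (norm := module) first_order

theorem sub_first_nijenhuis (h : IsFormalIso μ Nseq μ' Nseq' ψ) (x : g) :
    Nseq' 1 x - Nseq 1 x = Nseq 0 (ψ 1 x) - ψ 1 (Nseq' 0 x) := by
  obtain ⟨hψ0, -, hN⟩ := h
  have first_order := hN 1 x
  simp only [Finset.Nat.sum_antidiagonal_succ, Finset.Nat.antidiagonal_zero,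
    Finset.sum_singleton, zero_add, hψ0, LinearMap.id_apply] at first_order
  linear_combination (norm := module) first_order

end IsFormalIso

theorem equivalent_deformations_infinitesimal_general {K : Type*} [Field K]
    {g : Type*} [AddCommGroup g] [Module K g]
    (br : g →ₗ[K] g →ₗ[K] g)
    (N : g →ₗ[K] g)
    (μ μ' : ℕ → g →ₗ[K] g →ₗ[K] g) (Nseq Nseq' : ℕ → g →ₗ[K] g)
    (hdef : IsDeformation br N μ Nseq) (hdef' : IsDeformation br N μ' Nseq')
    (ψ : ℕ → g →ₗ[K] g) (hiso : IsFormalIso μ Nseq μ' Nseq' ψ) :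
    (∀ x y : g,
      μ' 1 x y - μ 1 x y = br x (ψ 1 y) + br (ψ 1 x) y - ψ 1 (br x y)) ∧
    (∀ x : g, Nseq' 1 x - Nseq 1 x = N (ψ 1 x) - ψ 1 (N x)) := by
  obtain ⟨hμ0, hN0, -⟩ := hdef
  obtain ⟨hμ'0, hN'0, -⟩ := hdef'
  refine ⟨fun x y => ?_, fun x => ?_⟩
  · rw [hiso.sub_first_bracket, hμ0, hμ'0]
  · rw [hiso.sub_first_nijenhuis, hN0, hN'0]

/-- The infinitesimals of two equivalent formal one-parameter deformations of a
Nijenhuis Leibniz algebra are cohomologous: their difference is the coboundary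
`d¹(ψ₁, 0)`. -/
theorem equivalent_deformations_infinitesimal {K : Type*} [Field K] [CharZero K]
    {g : Type*} [AddCommGroup g] [Module K g]
    (br : g →ₗ[K] g →ₗ[K] g)
    (leibniz : ∀ x y z : g, br x (br y z) = br (br x y) z + br y (br x z))
    (N : g →ₗ[K] g)
    (nijenhuis : ∀ x y : g,
      br (N x) (N y) = N (br (N x) y + br x (N y) - N (br x y)))
    (μ μ' : ℕ → g →ₗ[K] g →ₗ[K] g) (Nseq Nseq' : ℕ → g →ₗ[K] g)
    (hdef : IsDeformation br N μ Nseq) (hdef' : IsDeformation br N μ' Nseq')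
    (ψ : ℕ → g →ₗ[K] g) (hiso : IsFormalIso μ Nseq μ' Nseq' ψ) :
    (∀ x y : g,
      μ' 1 x y - μ 1 x y = br x (ψ 1 y) + br (ψ 1 x) y - ψ 1 (br x y)) ∧
    (∀ x : g, Nseq' 1 x - Nseq 1 x = N (ψ 1 x) - ψ 1 (N x)) :=
  equivalent_deformations_infinitesimal_general br N μ μ' Nseq Nseq' hdef hdef' ψ hiso
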